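/- arXiv:2108.09270 — 2 statements merged into one kernel-verified Lean document; each statement's English description precedes it below -/
import Mathlib

section
/- The loop and the stem are disjoint: L(n) ∩ STEM = ∅. -/
/-! Elements of the stem are pairwise comparable under reachability, and no element of the
stem lies on the orbit of its own successor (the orbit of `s z` misses `z` since `z` is not a
successor, and this is inherited along non-double steps). Hence `s` is injective on the stem, so
`n ∉ STEM`. Finally the complement of the stem is closed under `s`: a successor `s u` in the
stem is `s w` for a stem element `w` that is its only predecessor, so `u = w`. -/

def STEM {M : Type} (z : M) (s : M → M) : Set M :=
  { x | ∀ X : Set M, z ∈ X →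
      (∀ u, u ∈ X → (∀ v, s v = s u → v = u) → s u ∈ X) → x ∈ X }

def LOOP {M : Type} (s : M → M) (n : M) : Set M :=
  { x | ∀ X : Set M, n ∈ X → (∀ u, u ∈ X → s u ∈ X) → x ∈ X }

section Loop

variable {M : Type} {s : M → M} {n x y : M}

lemma loop_subset {X : Set M} (hn : n ∈ X) (hX : ∀ u ∈ X, s u ∈ X) : LOOP s n ⊆ X :=
  fun _ hx => hx X hn hX

lemma mem_loop_self : n ∈ LOOP s n := fun _ hn _ => hn

lemma succ_mem_loop (h : x ∈ LOOP s n) : s x ∈ LOOP s n :=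
  fun X hn hX => hX x (h X hn hX)

lemma loop_subset_loop (h : x ∈ LOOP s n) : LOOP s x ⊆ LOOP s n :=
  loop_subset h fun _ => succ_mem_loop

lemma eq_or_mem_loop_succ (h : y ∈ LOOP s n) : y = n ∨ y ∈ LOOP s (s n) := by
  refine loop_subset (X := {y | y = n ∨ y ∈ LOOP s (s n)}) (Or.inl rfl) ?_ h
  rintro u (rfl | hu)
  · exact Or.inr mem_loop_self
  · exact Or.inr (succ_mem_loop hu)

lemma eq_or_exists_eq_succ_of_mem_loop (h : y ∈ LOOP s n) :
    y = n ∨ ∃ w ∈ LOOP s n, y = s w := by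
  refine loop_subset (X := {y | y = n ∨ ∃ w ∈ LOOP s n, y = s w}) (Or.inl rfl) ?_ h
  rintro u (rfl | ⟨w, hw, rfl⟩)
  · exact Or.inr ⟨u, mem_loop_self, rfl⟩
  · exact Or.inr ⟨s w, succ_mem_loop hw, rfl⟩

lemma loop_succ_subset_range : LOOP s (s x) ⊆ Set.range s :=
  loop_subset ⟨x, rfl⟩ fun u _ => ⟨u, rfl⟩

end Loop

section Stem

variable {M : Type} {z : M} {s : M → M} {u x y : M}

lemma stem_subset {X : Set M} (hz : z ∈ X)
    (hX : ∀ u ∈ X, (∀ v, s v = s u → v = u) → s u ∈ X) : STEM z s ⊆ X :=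
  fun _ hx => hx X hz hX

lemma mem_stem_self : z ∈ STEM z s := fun _ hz _ => hz

lemma succ_mem_stem (hu : u ∈ STEM z s) (hinj : ∀ v, s v = s u → v = u) : s u ∈ STEM z s :=
  fun X hz hX => hX u (hu X hz hX) hinj

lemma stem_cases (hx : x ∈ STEM z s) :
    x = z ∨ ∃ w ∈ STEM z s, (∀ v, s v = s w → v = w) ∧ x = s w := by
  refine stem_subset (X := {x | x = z ∨ ∃ w ∈ STEM z s, (∀ v, s v = s w → v = w) ∧ x = s w})
    (Or.inl rfl) ?_ hx
  intro u hu hinj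
  have hu' : u ∈ STEM z s := by
    rcases hu with rfl | ⟨w, hw, hwinj, rfl⟩
    · exact mem_stem_self
    · exact succ_mem_stem hw hwinj
  exact Or.inr ⟨u, hu', hinj, rfl⟩

lemma stem_subset_loop : STEM z s ⊆ LOOP s z :=
  stem_subset mem_loop_self fun _ hu _ => succ_mem_loop hu

lemma mem_loop_or_mem_loop_of_mem_stem (hx : x ∈ STEM z s) (hy : y ∈ STEM z s) :
    x ∈ LOOP s y ∨ y ∈ LOOP s x := by
  refine stem_subset (X := {x | x ∈ LOOP s y ∨ y ∈ LOOP s x})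
    (Or.inr (stem_subset_loop hy)) ?_ hx
  rintro u (hu | hu) -
  · exact Or.inl (succ_mem_loop hu)
  · rcases eq_or_mem_loop_succ hu with rfl | hu
    · exact Or.inl (succ_mem_loop mem_loop_self)
    · exact Or.inr hu

lemma notMem_loop_succ_of_mem_stem (hz : ∀ x, s x ≠ z) (hx : x ∈ STEM z s) :
    x ∉ LOOP s (s x) := by
  refine stem_subset (X := {x | x ∉ LOOP s (s x)}) ?_ ?_ hx
  · intro hzl
    obtain ⟨w, hw⟩ := loop_succ_subset_range hzl
    exact hz w hw
  · intro u hu hinj hsu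
    rcases eq_or_exists_eq_succ_of_mem_loop hsu with h | ⟨w, hw, h⟩
    · have hfix : s u = u := hinj (s u) h.symm
      exact hu (by rw [hfix]; exact mem_loop_self)
    · obtain rfl : w = u := hinj w h.symm
      exact hu (loop_subset_loop (succ_mem_loop mem_loop_self) hw)

lemma injOn_stem (hz : ∀ x, s x ≠ z) : Set.InjOn s (STEM z s) := by
  intro x hx y hy hxy
  by_contra hne
  rcases mem_loop_or_mem_loop_of_mem_stem hx hy with h | h
  · rcases eq_or_mem_loop_succ h with h | h
    · exact hne h
    · exact notMem_loop_succ_of_mem_stem hz hx (hxy ▸ h)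
  · rcases eq_or_mem_loop_succ h with h | h
    · exact hne h.symm
    · exact notMem_loop_succ_of_mem_stem hz hy (hxy ▸ h)

lemma mem_stem_of_succ_mem_stem (hz : ∀ x, s x ≠ z) (h : s u ∈ STEM z s) : u ∈ STEM z s := by
  rcases stem_cases h with h | ⟨w, hw, hwinj, h⟩
  · exact absurd h (hz u)
  · exact hwinj u h ▸ hw

lemma loop_inter_stem_eq_empty (hz : ∀ x, s x ≠ z) {n : M} (hn : n ∉ STEM z s) :
    LOOP s n ∩ STEM z s = ∅ := by
  have hloop : LOOP s n ⊆ (STEM z s)ᶜ :=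
    loop_subset hn fun _ hu hsu => hu (mem_stem_of_succ_mem_stem hz hsu)
  exact Set.eq_empty_iff_forall_notMem.mpr fun x ⟨hxl, hxs⟩ => hloop hxl hxs

end Stem

theorem stmt16_general (M : Type) (z : M) (s : M → M)
    (hz : ∀ x : M, s x ≠ z)
    (k n : M) (hkn : s k = s n) (hk : k ∈ STEM z s) (hne : k ≠ n) :
    LOOP s n ∩ STEM z s = ∅ :=
  loop_inter_stem_eq_empty hz fun hn => hne (injOn_stem hz hk hn hkn)

theorem stmt16 (M : Type) (z : M) (s : M → M)
    (ind : ∀ P : M → Prop, P z → (∀ x, P x → P (s x)) → ∀ x, P x)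
    (hz : ∀ x : M, s x ≠ z)
    (k n : M) (hkn : s k = s n) (hk : k ∈ STEM z s) (hne : k ≠ n) :
    LOOP s n ∩ STEM z s = ∅ :=
  stmt16_general M z s hz k n hkn hk hne
end

section
/- The successor map is surjective on the loop: for every y in L(n) there exists x in L(n) with s x = y. In particular, n itself is the successor of some element of L(n). -/
/-! Every element is reached from `z`, and reaching `n` cannot stop at a stem element `u`,
since `u` has no sibling while `n` has the sibling `k`. Hence `n` is reached from every stem
element, in particular from `k`, and strictly after `k`, i.e. from `s k = s n`. So the loop of
`n` is a cycle, and `s` maps a cycle onto itself. -/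

section Loop

variable {M : Type} {s : M → M}

theorem self_mem_LOOP (a : M) : a ∈ LOOP s a :=
  fun _ ha _ => ha

theorem LOOP_subset {a : M} {X : Set M} (ha : a ∈ X) (hX : ∀ u ∈ X, s u ∈ X) :
    LOOP s a ⊆ X :=
  fun _ hy => hy X ha hX

theorem succ_mem_LOOP {a u : M} (hu : u ∈ LOOP s a) : s u ∈ LOOP s a :=
  fun X ha hX => hX _ (hu X ha hX)

theorem LOOP_subset_LOOP {a b : M} (hb : b ∈ LOOP s a) : LOOP s b ⊆ LOOP s a :=
  LOOP_subset hb fun _ => succ_mem_LOOP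

theorem eq_or_mem_LOOP_succ {a y : M} (hy : y ∈ LOOP s a) : y = a ∨ y ∈ LOOP s (s a) := by
  refine LOOP_subset (X := {y | y = a ∨ y ∈ LOOP s (s a)}) (Or.inl rfl) ?_ hy
  rintro u (rfl | hu)
  · exact Or.inr (self_mem_LOOP _)
  · exact Or.inr (succ_mem_LOOP hu)

theorem LOOP_succ_subset_image (a : M) : LOOP s (s a) ⊆ s '' LOOP s a :=
  LOOP_subset (Set.mem_image_of_mem s (self_mem_LOOP a))
    fun _ ⟨_, hw, hwu⟩ => hwu ▸ Set.mem_image_of_mem s (succ_mem_LOOP hw)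

theorem surjOn_LOOP {a : M} (ha : a ∈ LOOP s (s a)) : Set.SurjOn s (LOOP s a) (LOOP s a) :=
  (LOOP_subset_LOOP ha).trans (LOOP_succ_subset_image a)

end Loop

section Stem

variable {M : Type} {z : M} {s : M → M}

theorem mem_LOOP_zero (ind : ∀ P : M → Prop, P z → (∀ x, P x → P (s x)) → ∀ x, P x) (y : M) :
    y ∈ LOOP s z :=
  ind (· ∈ LOOP s z) (self_mem_LOOP z) (fun _ => succ_mem_LOOP) y

theorem mem_LOOP_of_mem_STEM (ind : ∀ P : M → Prop, P z → (∀ x, P x → P (s x)) → ∀ x, P x)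
    {n : M} (hn : ∃ k ≠ n, s k = s n) {x : M} (hx : x ∈ STEM z s) : n ∈ LOOP s x := by
  obtain ⟨k, hkn, hsk⟩ := hn
  refine hx {x | n ∈ LOOP s x} (mem_LOOP_zero ind n) ?_
  intro u hu hinj
  rcases eq_or_mem_LOOP_succ hu with rfl | h
  · exact absurd (hinj k hsk) hkn
  · exact h

end Stem

theorem stmt18_general (M : Type) (z : M) (s : M → M)
    (ind : ∀ P : M → Prop, P z → (∀ x, P x → P (s x)) → ∀ x, P x)
    (k n : M) (hkn : s k = s n) (hk : k ∈ STEM z s) (hne : k ≠ n) :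
    ∀ y ∈ LOOP s n, ∃ x ∈ LOOP s n, s x = y := by
  have hnk : n ∈ LOOP s k := mem_LOOP_of_mem_STEM ind ⟨k, hne, hkn⟩ hk
  have hcycle : n ∈ LOOP s (s n) := hkn ▸ (eq_or_mem_LOOP_succ hnk).resolve_left hne.symm
  exact surjOn_LOOP hcycle

theorem stmt18 (M : Type) (z : M) (s : M → M)
    (ind : ∀ P : M → Prop, P z → (∀ x, P x → P (s x)) → ∀ x, P x)
    (hz : ∀ x : M, s x ≠ z)
    (k n : M) (hkn : s k = s n) (hk : k ∈ STEM z s) (hne : k ≠ n) :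
    ∀ y ∈ LOOP s n, ∃ x ∈ LOOP s n, s x = y :=
  stmt18_general M z s ind k n hkn hk hne
end
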